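/- Let n ≥ 3, let g be a positive-definite symmetric bilinear form on ℝⁿ, and let R_{abcd} be a tensor with the Riemann symmetries: R_{abcd} = −R_{bacd}, R_{abcd} = −R_{abdc}, R_{abcd} = R_{cdab}, and R_{abcd} + R_{acdb} + R_{adbc} = 0. Define R_{ab}{}^c{}_d = g^{ce} R_{abed}, Ric_{bd} = R_{ab}{}^a{}_d, R = g^{bd} Ric_{bd}, P_{ab} = Ric_{ab}/(n−1), and W_{ab}{}^c{}_d = R_{ab}{}^c{}_d − δ_a{}^c P_{bd} + δ_b{}^c P_{ad}. If W = 0, then R_{abcd} = (R/(n(n−1)))(g_{ac} g_{bd} − g_{bc} g_{ad}); that is, a projectively flat curvature tensor is a constant-curvature tensor (Beltrami's theorem, pointwise algebraic form). -/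

import Mathlib

open scoped BigOperators

/-!  Common setup: we work on open subsets `U` of `ℝⁿ` (modelled as `Fin n → ℝ`).
A torsion-free affine connection is recorded through its Christoffel symbols
`Γ x a b c = Γ_a{}^b{}_c`, symmetric in `a, c`.  `pd F a x` is the partial
derivative `∂_a F (x)`. -/

/-- Partial derivative `∂_a F` at `x`. -/
noncomputable def pd {n : ℕ} (F : (Fin n → ℝ) → ℝ) (a : Fin n) (x : Fin n → ℝ) : ℝ :=
  fderiv ℝ F x (Pi.single a 1)

/-- Kronecker delta. -/
def kron {n : ℕ} (a b : Fin n) : ℝ := if a = b then 1 else 0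

/-- Curvature tensor `ρ_{ab}{}^c{}_d` of a connection with Christoffel symbols
`Γ x a b c = Γ_a{}^b{}_c`. -/
noncomputable def curv {n : ℕ} (Γ : (Fin n → ℝ) → Fin n → Fin n → Fin n → ℝ)
    (x : Fin n → ℝ) (a b c d : Fin n) : ℝ :=
  pd (fun y => Γ y b c d) a x - pd (fun y => Γ y a c d) b x
    + ∑ e, Γ x a c e * Γ x b e d - ∑ e, Γ x b c e * Γ x a e d

/-- Ricci tensor `Ric_{ad} = ρ_{ba}{}^b{}_d`. -/
noncomputable def ricci {n : ℕ} (Γ : (Fin n → ℝ) → Fin n → Fin n → Fin n → ℝ)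
    (x : Fin n → ℝ) (a d : Fin n) : ℝ :=
  ∑ b, curv Γ x b a b d

/-- Projective Schouten tensor `P_{ab} = Ric_{ab}/(n-1)`. -/
noncomputable def projP {n : ℕ} (Γ : (Fin n → ℝ) → Fin n → Fin n → Fin n → ℝ)
    (x : Fin n → ℝ) (a b : Fin n) : ℝ :=
  ricci Γ x a b / ((n : ℝ) - 1)

/-- Projective Weyl tensor `W_{ab}{}^c{}_d = ρ_{ab}{}^c{}_d - δ_a{}^c P_{bd} + δ_b{}^c P_{ad}`. -/
noncomputable def projW {n : ℕ} (Γ : (Fin n → ℝ) → Fin n → Fin n → Fin n → ℝ)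
    (x : Fin n → ℝ) (a b c d : Fin n) : ℝ :=
  curv Γ x a b c d - kron a c * projP Γ x b d + kron b c * projP Γ x a d

/-- Covariant derivative `∇_a P_{bc}` of the projective Schouten tensor. -/
noncomputable def nablaP {n : ℕ} (Γ : (Fin n → ℝ) → Fin n → Fin n → Fin n → ℝ)
    (x : Fin n → ℝ) (a b c : Fin n) : ℝ :=
  pd (fun y => projP Γ y b c) a x - ∑ d, Γ x a d b * projP Γ x d c
    - ∑ d, Γ x a d c * projP Γ x b d

/-- Cotton–York tensor `Y_{abc} = ½(∇_a P_{bc} - ∇_b P_{ac})`. -/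
noncomputable def cottonY {n : ℕ} (Γ : (Fin n → ℝ) → Fin n → Fin n → Fin n → ℝ)
    (x : Fin n → ℝ) (a b c : Fin n) : ℝ :=
  (nablaP Γ x a b c - nablaP Γ x b a c) / 2

/-- Covariant derivative `∇_a σ^{bc}` of a contravariant symmetric 2-tensor field. -/
noncomputable def nablaSig {n : ℕ} (Γ : (Fin n → ℝ) → Fin n → Fin n → Fin n → ℝ)
    (σ : (Fin n → ℝ) → Fin n → Fin n → ℝ) (x : Fin n → ℝ) (a b c : Fin n) : ℝ :=
  pd (fun y => σ y b c) a x + ∑ d, Γ x a b d * σ x d c + ∑ d, Γ x a c d * σ x b d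

/-- Covariant derivative `∇_a μ^b` of a vector field. -/
noncomputable def nablaVec {n : ℕ} (Γ : (Fin n → ℝ) → Fin n → Fin n → Fin n → ℝ)
    (μ : (Fin n → ℝ) → Fin n → ℝ) (x : Fin n → ℝ) (a b : Fin n) : ℝ :=
  pd (fun y => μ y b) a x + ∑ c, Γ x a b c * μ x c

/-!
Vanishing of `W` says `R_{abcd} = g_{ca} P_{bd} - g_{cb} P_{ad}`. Antisymmetry of `R` in its last
pair, contracted with `g^{ac}`, gives `n P_{bd} = (g^{ac} P_{ac}) g_{db}`, so `P` is a multiple of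
`g`; the Ricci contraction of `W = 0` gives `Ric = (n - 1) P`, which identifies the multiple as
`S / (n (n - 1))`.
-/

open Finset

section

variable {n : ℕ}

theorem sum_kron_mul (a : Fin n) (f : Fin n → ℝ) : ∑ e, kron a e * f e = f a := by
  simp [kron]

theorem sum_kron_mul' (a : Fin n) (f : Fin n → ℝ) : ∑ e, kron e a * f e = f a := by
  simp [kron]

theorem sum_mul_kron (a : Fin n) (f : Fin n → ℝ) : ∑ e, f e * kron a e = f a := by
  simp [kron]

theorem sum_kron_self : ∑ a : Fin n, kron a a = n := by
  simp [kron]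

theorem sum_kron_mul_sub_kron_mul (P : Fin n → Fin n → ℝ) (b d : Fin n) :
    ∑ a, (kron a a * P b d - kron b a * P a d) = ((n : ℝ) - 1) * P b d := by
  rw [sum_sub_distrib, ← sum_mul, sum_kron_self, sum_kron_mul]
  ring

variable {g : Matrix (Fin n) (Fin n) ℝ}

theorem sum_inv_mul_apply (hg : IsUnit g.det) (a b : Fin n) :
    ∑ c, g⁻¹ a c * g c b = kron a b := by
  simpa [Matrix.mul_apply, Matrix.one_apply, kron] using
    congrFun (congrFun (Matrix.nonsing_inv_mul g hg) a) b

theorem sum_mul_inv_apply (hg : IsUnit g.det) (a b : Fin n) :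
    ∑ c, g a c * g⁻¹ c b = kron a b := by
  simpa [Matrix.mul_apply, Matrix.one_apply, kron] using
    congrFun (congrFun (Matrix.mul_nonsing_inv g hg) a) b

theorem eq_sum_mul_of_eq_sum_inv_mul (hg : IsUnit g.det) {v w : Fin n → ℝ}
    (hw : ∀ c, w c = ∑ e, g⁻¹ c e * v e) (c : Fin n) : v c = ∑ e, g c e * w e := by
  have hw' : w = g⁻¹.mulVec v := funext hw
  change v c = g.mulVec w c
  rw [hw', Matrix.mulVec_mulVec, Matrix.mul_nonsing_inv g hg, Matrix.one_mulVec]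

noncomputable def metricTrace (g P : Matrix (Fin n) (Fin n) ℝ) : ℝ :=
  ∑ a, ∑ c, g⁻¹ a c * P a c

theorem metricTrace_smul (g P : Matrix (Fin n) (Fin n) ℝ) (r : ℝ) :
    metricTrace g (r • P) = r * metricTrace g P := by
  simp only [metricTrace, Matrix.smul_apply, smul_eq_mul, mul_sum]
  exact sum_congr rfl fun a _ => sum_congr rfl fun c _ => by ring

theorem card_mul_eq_metricTrace_mul_of_antisymm (hg : IsUnit g.det)
    (P : Matrix (Fin n) (Fin n) ℝ)
    (h : ∀ a b c d, g c a * P b d - g c b * P a d = -(g d a * P b c - g d b * P a c))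
    (b d : Fin n) : n * P b d = metricTrace g P * g d b := by
  have hcontr : ∑ a, ∑ c, g⁻¹ a c *
      (g c a * P b d - g c b * P a d + g d a * P b c - g d b * P a c) = 0 :=
    sum_eq_zero fun a _ => sum_eq_zero fun c _ => by rw [h a b c d]; ring
  have e1 : ∑ a, ∑ c, g⁻¹ a c * (g c a * P b d) = n * P b d := by
    simp_rw [← mul_assoc, ← sum_mul, sum_inv_mul_apply hg, sum_kron_self]
  have e2 : ∑ a, ∑ c, g⁻¹ a c * (g c b * P a d) = P b d := by
    simp_rw [← mul_assoc, ← sum_mul, sum_inv_mul_apply hg, sum_kron_mul']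
  have e3 : ∑ a, ∑ c, g⁻¹ a c * (g d a * P b c) = P b d := by
    rw [sum_comm]
    simp_rw [mul_left_comm (g⁻¹ _ _), ← mul_assoc, ← sum_mul, sum_mul_inv_apply hg, sum_kron_mul]
  have e4 : ∑ a, ∑ c, g⁻¹ a c * (g d b * P a c) = metricTrace g P * g d b := by
    simp_rw [metricTrace, sum_mul]
    exact sum_congr rfl fun a _ => sum_congr rfl fun c _ => by ring
  simp only [mul_add, mul_sub, sum_add_distrib, sum_sub_distrib, e1, e2, e3, e4] at hcontr
  linarith

end

theorem projectively_flat_curvature_is_constant_curvature_general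
    {n : ℕ} (hn : 3 ≤ n)
    (g : Matrix (Fin n) (Fin n) ℝ) (hg : g.PosDef)
    (R : Fin n → Fin n → Fin n → Fin n → ℝ)
    (hR2 : ∀ a b c d, R a b c d = - R a b d c)
    (Rup : Fin n → Fin n → Fin n → Fin n → ℝ)
    (hRup : ∀ a b c d, Rup a b c d = ∑ e, g⁻¹ c e * R a b e d)
    (Ric : Fin n → Fin n → ℝ)
    (hRic : ∀ b d, Ric b d = ∑ a, Rup a b a d)
    (S : ℝ) (hS : S = ∑ b, ∑ d, g⁻¹ b d * Ric b d)
    (P : Fin n → Fin n → ℝ)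
    (W : Fin n → Fin n → Fin n → Fin n → ℝ)
    (hW : ∀ a b c d, W a b c d = Rup a b c d - kron a c * P b d + kron b c * P a d)
    (hW0 : ∀ a b c d, W a b c d = 0) :
    ∀ a b c d,
      R a b c d = (S / ((n : ℝ) * ((n : ℝ) - 1))) * (g a c * g b d - g b c * g a d) := by
  have hdet : IsUnit g.det := isUnit_iff_ne_zero.mpr hg.det_pos.ne'
  have hsym : ∀ a b, g a b = g b a := fun a b => by simpa using (hg.isHermitian.apply a b).symm
  have hRupP : ∀ a b c d, Rup a b c d = kron a c * P b d - kron b c * P a d := fun a b c d => by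
    linarith [hW a b c d, hW0 a b c d]
  have hRP : ∀ a b c d, R a b c d = g c a * P b d - g c b * P a d := fun a b c d => by
    rw [eq_sum_mul_of_eq_sum_inv_mul hdet (hRup a b · d)]
    simp_rw [hRupP, mul_sub, sum_sub_distrib, ← mul_assoc, ← sum_mul, sum_mul_kron]
  have hPg := card_mul_eq_metricTrace_mul_of_antisymm hdet P fun a b c d => by
    rw [← hRP, ← hRP, hR2]
  have hRicP : Ric = ((n : ℝ) - 1) • P := by
    ext b d
    rw [hRic]
    simp_rw [hRupP, sum_kron_mul_sub_kron_mul, Pi.smul_apply, smul_eq_mul]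
  have hST : S = ((n : ℝ) - 1) * metricTrace g P := by
    calc S = metricTrace g Ric := hS
      _ = metricTrace g (((n : ℝ) - 1) • P) := by rw [hRicP]
      _ = ((n : ℝ) - 1) * metricTrace g P := metricTrace_smul g P _
  have hn0 : (n : ℝ) ≠ 0 := by positivity
  have hn1 : (n : ℝ) - 1 ≠ 0 := by
    have : (3 : ℝ) ≤ n := by exact_mod_cast hn
    linarith
  intro a b c d
  rw [hRP, hST, hsym c a, hsym c b]
  field_simp
  linear_combination (g a c) * hPg b d - (g b c) * hPg a d
    + metricTrace g P * (g a c * hsym d b - g b c * hsym d a)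

/-- Beltrami, pointwise algebraic form: if the projective Weyl
tensor of a curvature tensor with the Riemann symmetries vanishes, then the
curvature tensor is a constant-curvature tensor,
`R_{abcd} = (R/(n(n-1)))(g_{ac} g_{bd} - g_{bc} g_{ad})`. -/
theorem projectively_flat_curvature_is_constant_curvature
    {n : ℕ} (hn : 3 ≤ n)
    (g : Matrix (Fin n) (Fin n) ℝ) (hg : g.PosDef)
    (R : Fin n → Fin n → Fin n → Fin n → ℝ)
    (hR1 : ∀ a b c d, R a b c d = - R b a c d)
    (hR2 : ∀ a b c d, R a b c d = - R a b d c)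
    (hR3 : ∀ a b c d, R a b c d = R c d a b)
    (hR4 : ∀ a b c d, R a b c d + R a c d b + R a d b c = 0)
    (Rup : Fin n → Fin n → Fin n → Fin n → ℝ)
    (hRup : ∀ a b c d, Rup a b c d = ∑ e, g⁻¹ c e * R a b e d)
    (Ric : Fin n → Fin n → ℝ)
    (hRic : ∀ b d, Ric b d = ∑ a, Rup a b a d)
    (S : ℝ) (hS : S = ∑ b, ∑ d, g⁻¹ b d * Ric b d)
    (P : Fin n → Fin n → ℝ)
    (hP : ∀ a b, P a b = Ric a b / ((n : ℝ) - 1))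
    (W : Fin n → Fin n → Fin n → Fin n → ℝ)
    (hW : ∀ a b c d, W a b c d = Rup a b c d - kron a c * P b d + kron b c * P a d)
    (hW0 : ∀ a b c d, W a b c d = 0) :
    ∀ a b c d,
      R a b c d = (S / ((n : ℝ) * ((n : ℝ) - 1))) * (g a c * g b d - g b c * g a d) :=
  projectively_flat_curvature_is_constant_curvature_general hn g hg R hR2 Rup hRup Ric hRic S hS P W
    hW hW0
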